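/- arXiv:1904.00769 — 2 statements merged into one kernel-verified Lean document; each statement's English description precedes it below -/
import Mathlib

section
/- Let k be a field and n, r ≥ 1. Regard M := (k[π]/(π^r))^n as an nr-dimensional k-vector space with basis x_j^{(i)} := π^i e_j for 1 ≤ j ≤ n and 0 ≤ i ≤ r-1, where e_1, ..., e_n is the standard basis. Order the basis vectors x_j^{(i)} lexicographically by (j, i) (first by the index j, then by the level i), and let 𝓕 be the complete flag of k-subspaces of M whose members are the spans of the initial segments of this ordered basis. Then the subgroup of GL_n(k[π]/(π^r)), acting k-linearly on M in the natural way, consisting of those g that stabilize every subspace in 𝓕, is exactly the set of invertible upper triangular matrices g over k[π]/(π^r) whose diagonal entries g_{jj} all lie in the subfield k ⊆ k[π]/(π^r) of constants. -/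
open Polynomial

section FlagStabAux

variable {k : Type*} [Field k] {n r : ℕ}

theorem flagStab_mem_span_powers (c : AdjoinRoot (X ^ r : k[X])) :
    c ∈ Submodule.span k
      (Set.range fun i : Fin r => AdjoinRoot.root (X ^ r : k[X]) ^ (i : ℕ)) := by
  have hf : (X ^ r : k[X]) ≠ 0 := pow_ne_zero _ X_ne_zero
  set pb := AdjoinRoot.powerBasis hf with hpb
  have hdim : pb.dim = r := by simp [hpb]
  have h1 : c ∈ Submodule.span k (Set.range pb.basis) := pb.basis.mem_span c
  refine Submodule.span_mono ?_ h1
  rintro x ⟨i, rfl⟩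
  refine ⟨⟨(i : ℕ), lt_of_lt_of_eq i.2 hdim⟩, ?_⟩
  simp [pb.coe_basis, hpb]

/-- The generating set of the flag subspace `V m`. -/
def flagSet (k : Type*) [Field k] (n r : ℕ) (m : ℕ) :
    Set (Fin n → AdjoinRoot (X ^ r : k[X])) :=
  {w | ∃ (j : Fin n) (i : Fin r), (j : ℕ) * r + (i : ℕ) < m ∧
      w = AdjoinRoot.root (X ^ r : k[X]) ^ (i : ℕ) •
            Pi.single j (1 : AdjoinRoot (X ^ r : k[X]))}

theorem flagStab_component {m : ℕ} {v : Fin n → AdjoinRoot (X ^ r : k[X])}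
    (hv : v ∈ Submodule.span k (flagSet k n r m)) (a : Fin n) :
    v a ∈ Submodule.span k
      {x | ∃ i : Fin r, (a : ℕ) * r + (i : ℕ) < m ∧
        x = AdjoinRoot.root (X ^ r : k[X]) ^ (i : ℕ)} := by
  classical
  let ev : (Fin n → AdjoinRoot (X ^ r : k[X])) →ₗ[k] AdjoinRoot (X ^ r : k[X]) :=
    LinearMap.proj a
  have h1 : ev v ∈ Submodule.span k (ev '' flagSet k n r m) :=
    Submodule.apply_mem_span_image_of_mem_span ev hv
  refine Submodule.span_le.2 ?_ h1
  rintro x ⟨w, ⟨j, i, hlt, rfl⟩, rfl⟩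
  by_cases hj : j = a
  · subst hj
    refine Submodule.subset_span ⟨i, hlt, ?_⟩
    simp [ev]
  · have : ev ((AdjoinRoot.root (X ^ r : k[X]) ^ (i : ℕ)) •
        (Pi.single j (1 : AdjoinRoot (X ^ r : k[X])) :
          Fin n → AdjoinRoot (X ^ r : k[X]))) = 0 := by
      simp [ev, Pi.single_apply, Ne.symm hj]
    rw [this]
    exact Submodule.zero_mem _

theorem flagStab_single_mem {m : ℕ} (a : Fin n) (hm : ((a : ℕ) + 1) * r ≤ m)
    (c : AdjoinRoot (X ^ r : k[X])) :
    Pi.single a c ∈ Submodule.span k (flagSet k n r m) := by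
  classical
  let L : AdjoinRoot (X ^ r : k[X]) →ₗ[k] (Fin n → AdjoinRoot (X ^ r : k[X])) :=
    (LinearMap.single (AdjoinRoot (X ^ r : k[X]))
      (fun _ : Fin n => AdjoinRoot (X ^ r : k[X])) a).restrictScalars k
  have h1 : L c ∈ Submodule.span k
      (L '' Set.range fun i : Fin r => AdjoinRoot.root (X ^ r : k[X]) ^ (i : ℕ)) :=
    Submodule.apply_mem_span_image_of_mem_span L (flagStab_mem_span_powers c)
  have h2 : Submodule.span k
      (L '' Set.range fun i : Fin r => AdjoinRoot.root (X ^ r : k[X]) ^ (i : ℕ)) ≤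
      Submodule.span k (flagSet k n r m) := by
    refine Submodule.span_le.2 ?_
    rintro x ⟨y, ⟨i, rfl⟩, rfl⟩
    refine Submodule.subset_span ⟨a, i, ?_, ?_⟩
    · calc (a : ℕ) * r + (i : ℕ) < (a : ℕ) * r + r := by
            exact Nat.add_lt_add_left i.2 _
        _ = ((a : ℕ) + 1) * r := by ring
        _ ≤ m := hm
    · ext b
      simp [L, Pi.single_apply]
  exact h2 h1

end FlagStabAux

/-- The stabilizer in `GL_n(k[π]/(π^r))` of the complete `k`-flag on `(k[π]/(π^r))^n`
spanned by initial segments of the basis `x_j^{(i)} = π^i e_j` ordered lexicographically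
by `(j,i)` consists exactly of the invertible upper triangular matrices whose diagonal
entries lie in the subfield `k` of constants. -/
theorem flag_stabilizer_lex_ji (k : Type*) [Field k] (n r : ℕ) (hn : 1 ≤ n) (hr : 1 ≤ r)
    (g : (Matrix (Fin n) (Fin n) (AdjoinRoot (X ^ r : k[X])))ˣ) :
    (∀ m : ℕ, ∀ v ∈ Submodule.span k
        {w : Fin n → AdjoinRoot (X ^ r : k[X]) |
          ∃ (j : Fin n) (i : Fin r), (j : ℕ) * r + (i : ℕ) < m ∧
            w = AdjoinRoot.root (X ^ r : k[X]) ^ (i : ℕ) •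
                  Pi.single j (1 : AdjoinRoot (X ^ r : k[X]))},
      (g : Matrix (Fin n) (Fin n) (AdjoinRoot (X ^ r : k[X]))).mulVec v ∈
        Submodule.span k
          {w : Fin n → AdjoinRoot (X ^ r : k[X]) |
            ∃ (j : Fin n) (i : Fin r), (j : ℕ) * r + (i : ℕ) < m ∧
              w = AdjoinRoot.root (X ^ r : k[X]) ^ (i : ℕ) •
                    Pi.single j (1 : AdjoinRoot (X ^ r : k[X]))}) ↔
    ((∀ a b : Fin n, b < a →
        (g : Matrix (Fin n) (Fin n) (AdjoinRoot (X ^ r : k[X]))) a b = 0) ∧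
      ∀ a : Fin n, ∃ c : k,
        (g : Matrix (Fin n) (Fin n) (AdjoinRoot (X ^ r : k[X]))) a a =
          AdjoinRoot.of (X ^ r : k[X]) c) := by
  classical
  have hSet : ∀ m : ℕ,
      {w : Fin n → AdjoinRoot (X ^ r : k[X]) |
        ∃ (j : Fin n) (i : Fin r), (j : ℕ) * r + (i : ℕ) < m ∧
          w = AdjoinRoot.root (X ^ r : k[X]) ^ (i : ℕ) •
                Pi.single j (1 : AdjoinRoot (X ^ r : k[X]))} = flagSet k n r m :=
    fun m => rfl
  simp only [hSet]
  set π := AdjoinRoot.root (X ^ r : k[X]) with hπ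
  set G := (g : Matrix (Fin n) (Fin n) (AdjoinRoot (X ^ r : k[X]))) with hG
  constructor
  · intro hstab
    -- the basic computation: column b of g lands in V (b*r+1)
    have key : ∀ b : Fin n, ∀ a : Fin n,
        G a b ∈ Submodule.span k
          {x | ∃ i : Fin r, (a : ℕ) * r + (i : ℕ) < (b : ℕ) * r + 1 ∧
            x = π ^ (i : ℕ)} := by
      intro b a
      have hmem : (Pi.single b (1 : AdjoinRoot (X ^ r : k[X]))) ∈
          Submodule.span k (flagSet k n r ((b : ℕ) * r + 1)) := by
        refine Submodule.subset_span ⟨b, ⟨0, hr⟩, by simp, ?_⟩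
        simp
      have h2 := hstab ((b : ℕ) * r + 1) _ hmem
      have h3 : G.mulVec (Pi.single b (1 : AdjoinRoot (X ^ r : k[X]))) a = G a b := by
        simp [Matrix.mulVec_single]
      have := flagStab_component h2 a
      rwa [h3] at this
    constructor
    · intro a b hba
      have h := key b a
      have hempty : {x | ∃ i : Fin r, (a : ℕ) * r + (i : ℕ) < (b : ℕ) * r + 1 ∧
          x = π ^ (i : ℕ)} = (∅ : Set (AdjoinRoot (X ^ r : k[X]))) := by
        ext x
        simp only [Set.mem_setOf_eq, Set.mem_empty_iff_false, iff_false, not_exists]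
        rintro i ⟨hlt, -⟩
        have hab : (b : ℕ) + 1 ≤ (a : ℕ) := hba
        have : ((b : ℕ) + 1) * r ≤ (a : ℕ) * r := Nat.mul_le_mul_right r hab
        have : (b : ℕ) * r + r ≤ (a : ℕ) * r := by nlinarith
        omega
      rw [hempty, Submodule.span_empty, Submodule.mem_bot] at h
      exact h
    · intro a
      have h := key a a
      have hsub : {x | ∃ i : Fin r, (a : ℕ) * r + (i : ℕ) < (a : ℕ) * r + 1 ∧
          x = π ^ (i : ℕ)} ⊆ {(1 : AdjoinRoot (X ^ r : k[X]))} := by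
        rintro x ⟨i, hlt, rfl⟩
        have : (i : ℕ) = 0 := by omega
        simp [this]
      have h2 : G a a ∈ Submodule.span k {(1 : AdjoinRoot (X ^ r : k[X]))} :=
        Submodule.span_mono hsub h
      rw [Submodule.mem_span_singleton] at h2
      obtain ⟨c, hc⟩ := h2
      refine ⟨c, ?_⟩
      rw [← hc, ← AdjoinRoot.algebraMap_eq, Algebra.smul_def, mul_one]
  · rintro ⟨hut, hdiag⟩ m v hv
    let L : (Fin n → AdjoinRoot (X ^ r : k[X])) →ₗ[k] (Fin n → AdjoinRoot (X ^ r : k[X])) :=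
      (Matrix.mulVecLin G).restrictScalars k
    have hgen : flagSet k n r m ⊆
        ((Submodule.span k (flagSet k n r m)).comap L : Set _) := by
      rintro w ⟨j, i, hlt, rfl⟩
      simp only [Submodule.mem_comap, SetLike.mem_coe]
      have hLw : L (π ^ (i : ℕ) •
            (Pi.single j (1 : AdjoinRoot (X ^ r : k[X])) :
              Fin n → AdjoinRoot (X ^ r : k[X]))) =
          ∑ a : Fin n, Pi.single a (π ^ (i : ℕ) * G a j) := by
        rw [Finset.univ_sum_single (fun a => π ^ (i : ℕ) * G a j)]
        ext a
        simp [L, Matrix.mulVecLin_apply, Matrix.mulVec, dotProduct, Pi.single_apply,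
          Finset.mul_sum, mul_comm, mul_ite]
      rw [hLw]
      refine Submodule.sum_mem _ fun a _ => ?_
      rcases lt_trichotomy a j with hlt' | heq | hgt
      · refine flagStab_single_mem a ?_ _
        have : ((a : ℕ) + 1) * r ≤ (j : ℕ) * r := Nat.mul_le_mul_right r hlt'
        omega
      · subst heq
        obtain ⟨c, hc⟩ := hdiag a
        have : (Pi.single a (π ^ (i : ℕ) * G a a) :
              Fin n → AdjoinRoot (X ^ r : k[X])) =
            c • (π ^ (i : ℕ) • (Pi.single a (1 : AdjoinRoot (X ^ r : k[X])) :
              Fin n → AdjoinRoot (X ^ r : k[X]))) := by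
          rw [hc]
          ext b
          by_cases hb : b = a
          · subst hb
            simp [Pi.single_apply, Algebra.smul_def, ← AdjoinRoot.algebraMap_eq, mul_comm]
          · simp [Pi.single_apply, hb]
        rw [this]
        exact Submodule.smul_mem _ c (Submodule.subset_span ⟨a, i, hlt, rfl⟩)
      · have : G a j = 0 := hut a j hgt
        rw [this, mul_zero]
        simp
    have := Submodule.span_le.2 hgen hv
    simpa [L, Matrix.mulVecLin_apply] using this
end

section
/- Let k be a field and n, r ≥ 1. Regard M := (k[π]/(π^r))^n as an nr-dimensional k-vector space with basis x_j^{(i)} := π^i e_j for 1 ≤ j ≤ n and 0 ≤ i ≤ r-1, where e_1, ..., e_n is the standard basis. Order the basis vectors x_j^{(i)} lexicographically by (i, j) (first by the level i, then by the index j), and let 𝓕 be the complete flag of k-subspaces of M whose members are the spans of the initial segments of this ordered basis. Then the subgroup of GL_n(k[π]/(π^r)), acting k-linearly on M in the natural way, consisting of those g that stabilize every subspace in 𝓕, is exactly the set of invertible upper triangular matrices g over k[π]/(π^r) all of whose entries lie in the subfield k ⊆ k[π]/(π^r) of constants; equivalently, it is the image of the group of invertible upper triangular matrices of GL_n(k)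 under the inclusion k ↪ k[π]/(π^r). -/
/-!
The image `g e_b` of a basis vector must lie in the `(b + 1)`-st member of the flag, which, as
`b < n`, is spanned by the constant vectors `e_0, …, e_b`: this forces `g` to be upper triangular
with constant entries. Conversely a constant matrix commutes with multiplication by `π`, so an
upper triangular one maps `π ^ i • e_j` into the span of the `π ^ i • e_a` with `a ≤ j`. Such a
matrix is invertible over `k` because the determinant commutes with `k ↪ k[π]/(π^r)`.
-/

open Polynomial Matrix

theorem exists_blockTriangular_eq_map_iff {ι k R : Type*} [LT ι] [Semiring k] [Semiring R]
    {f : k →+* R} (hf : Function.Injective f) (G : Matrix ι ι R) :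
    (∃ A : Matrix ι ι k, A.BlockTriangular id ∧ G = A.map f) ↔
      (∀ a b : ι, b < a → G a b = 0) ∧ ∀ a b : ι, ∃ c : k, G a b = f c := by
  constructor
  · rintro ⟨A, hA, rfl⟩
    exact ⟨fun a b hba => by simp [hA hba], fun a b => ⟨A a b, rfl⟩⟩
  · rintro ⟨hG, hc⟩
    choose c hc using hc
    refine ⟨Matrix.of c, fun a b hba => hf ?_, ext hc⟩
    simp [← hc, hG a b hba]

theorem exists_unit_blockTriangular_eq_map_iff {ι k R : Type*} [Fintype ι] [DecidableEq ι] [LT ι]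
    [Field k] [CommRing R] [Nontrivial R] {f : k →+* R} {G : Matrix ι ι R} (hG : IsUnit G) :
    (∃ h : (Matrix ι ι k)ˣ, (∀ a b : ι, b < a → (h : Matrix ι ι k) a b = 0) ∧
        G = (h : Matrix ι ι k).map f) ↔
      ∃ A : Matrix ι ι k, A.BlockTriangular id ∧ G = A.map f := by
  constructor
  · rintro ⟨h, hh, hG⟩
    exact ⟨h, fun a b hba => hh a b hba, hG⟩
  · rintro ⟨A, hA, rfl⟩
    have hAunit : IsUnit A := by
      rw [isUnit_iff_isUnit_det] at hG ⊢
      rwa [← isUnit_map_iff f, RingHom.map_det]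
    exact ⟨hAunit.unit, fun a b hba => hA hba, rfl⟩

section LexFlag

variable (k : Type*) {R : Type*} [Field k] [CommRing R] [Algebra k R]

/-- The `m`-th member of the flag, spanned by the first `m` vectors `π ^ i • e_j` in the
lexicographic order of `(i, j)`, i.e. of the index `i * n + j`. -/
def lexFlag (π : R) (n r m : ℕ) : Submodule k (Fin n → R) :=
  Submodule.span k
    {w | ∃ (j : Fin n) (i : Fin r), (i : ℕ) * n + (j : ℕ) < m ∧ w = π ^ (i : ℕ) • Pi.single j 1}

variable {k} {π : R} {n r : ℕ}

theorem single_one_mem_lexFlag (hr : 0 < r) (j : Fin n) :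
    Pi.single j 1 ∈ lexFlag k π n r (j + 1) :=
  Submodule.subset_span ⟨j, ⟨0, hr⟩, by simp, by simp⟩

theorem lexFlag_le_pi {m : ℕ} (hm : m ≤ n) :
    lexFlag k π n r m ≤ Submodule.pi Set.univ fun a : Fin n =>
      if m ≤ a then ⊥ else Subalgebra.toSubmodule (⊥ : Subalgebra k R) := by
  refine Submodule.span_le.mpr ?_
  rintro _ ⟨j, i, hlt, rfl⟩ a -
  dsimp only
  have hi : (i : ℕ) = 0 := by
    by_contra hi
    have : n ≤ (i : ℕ) * n := Nat.le_mul_of_pos_left n (Nat.pos_of_ne_zero hi)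
    omega
  split_ifs with ha
  · have hne : a ≠ j := by rintro rfl; omega
    simp [hi, Pi.single_eq_of_ne hne]
  · rw [hi, pow_zero, one_smul, Pi.single_apply]
    split_ifs
    exacts [(⊥ : Subalgebra k R).one_mem, zero_mem _]

theorem map_algebraMap_mulVec_smul_single (A : Matrix (Fin n) (Fin n) k) (i : ℕ) (j : Fin n) :
    A.map (algebraMap k R) *ᵥ (π ^ i • Pi.single j 1) =
      ∑ a, A a j • (π ^ i • Pi.single a 1) := by
  rw [mulVec_smul]
  ext a
  simp [Finset.sum_apply, Pi.single_apply, Algebra.smul_def, mul_comm]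

theorem map_algebraMap_mulVec_mem_lexFlag {A : Matrix (Fin n) (Fin n) k}
    (hA : A.BlockTriangular id) {m : ℕ} {v : Fin n → R} (hv : v ∈ lexFlag k π n r m) :
    A.map (algebraMap k R) *ᵥ v ∈ lexFlag k π n r m := by
  let f : (Fin n → R) →ₗ[k] Fin n → R := (A.map (algebraMap k R)).mulVecLin.restrictScalars k
  suffices lexFlag k π n r m ≤ (lexFlag k π n r m).comap f from this hv
  refine Submodule.span_le.mpr ?_
  rintro _ ⟨j, i, hlt, rfl⟩
  change A.map (algebraMap k R) *ᵥ (π ^ (i : ℕ) • Pi.single j 1) ∈ lexFlag k π n r m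
  rw [map_algebraMap_mulVec_smul_single]
  refine Submodule.sum_mem _ fun a _ => ?_
  by_cases haj : a ≤ j
  · exact Submodule.smul_mem _ _ (Submodule.subset_span ⟨a, i, by omega, rfl⟩)
  · simp [hA (not_le.mp haj)]

theorem entries_of_forall_mulVec_mem_lexFlag (hr : 0 < r) {G : Matrix (Fin n) (Fin n) R}
    (H : ∀ m, ∀ v ∈ lexFlag k π n r m, G *ᵥ v ∈ lexFlag k π n r m) (a b : Fin n) :
    (b < a → G a b = 0) ∧ ∃ c : k, G a b = algebraMap k R c := by
  have hcol : G.col b ∈ lexFlag k π n r (b + 1) := by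
    rw [← mulVec_single_one]
    exact H _ _ (single_one_mem_lexFlag hr b)
  have hab := (Submodule.mem_pi.mp (lexFlag_le_pi b.isLt hcol)) a (Set.mem_univ a)
  simp only [col_apply] at hab
  split_ifs at hab with h
  · exact ⟨fun _ => (Submodule.mem_bot k).mp hab, 0, by simp [(Submodule.mem_bot k).mp hab]⟩
  · obtain ⟨c, hc⟩ := Algebra.mem_bot.mp hab
    exact ⟨fun hba => absurd hba (by omega), c, hc.symm⟩

theorem forall_mulVec_mem_lexFlag_iff [Nontrivial R] (hr : 0 < r) (G : Matrix (Fin n) (Fin n) R) :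
    (∀ m, ∀ v ∈ lexFlag k π n r m, G *ᵥ v ∈ lexFlag k π n r m) ↔
      ∃ A : Matrix (Fin n) (Fin n) k, A.BlockTriangular id ∧ G = A.map (algebraMap k R) := by
  constructor
  · intro H
    exact (exists_blockTriangular_eq_map_iff (algebraMap k R).injective G).mpr
      ⟨fun a b => (entries_of_forall_mulVec_mem_lexFlag hr H a b).1,
        fun a b => (entries_of_forall_mulVec_mem_lexFlag hr H a b).2⟩
  · rintro ⟨A, hA, rfl⟩ m v hv
    exact map_algebraMap_mulVec_mem_lexFlag hA hv

end LexFlag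

theorem flag_stabilizer_lex_ij_general (k : Type*) [Field k] (n r : ℕ) (hr : 1 ≤ r)
    (g : (Matrix (Fin n) (Fin n) (AdjoinRoot (X ^ r : k[X])))ˣ) :
    ((∀ m : ℕ, ∀ v ∈ Submodule.span k
        {w : Fin n → AdjoinRoot (X ^ r : k[X]) |
          ∃ (j : Fin n) (i : Fin r), (i : ℕ) * n + (j : ℕ) < m ∧
            w = AdjoinRoot.root (X ^ r : k[X]) ^ (i : ℕ) •
                  Pi.single j (1 : AdjoinRoot (X ^ r : k[X]))},
      (g : Matrix (Fin n) (Fin n) (AdjoinRoot (X ^ r : k[X]))).mulVec v ∈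
        Submodule.span k
          {w : Fin n → AdjoinRoot (X ^ r : k[X]) |
            ∃ (j : Fin n) (i : Fin r), (i : ℕ) * n + (j : ℕ) < m ∧
              w = AdjoinRoot.root (X ^ r : k[X]) ^ (i : ℕ) •
                    Pi.single j (1 : AdjoinRoot (X ^ r : k[X]))}) ↔
      ((∀ a b : Fin n, b < a →
          (g : Matrix (Fin n) (Fin n) (AdjoinRoot (X ^ r : k[X]))) a b = 0) ∧
        ∀ a b : Fin n, ∃ c : k,
          (g : Matrix (Fin n) (Fin n) (AdjoinRoot (X ^ r : k[X]))) a b =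
            AdjoinRoot.of (X ^ r : k[X]) c)) ∧
    ((∀ m : ℕ, ∀ v ∈ Submodule.span k
        {w : Fin n → AdjoinRoot (X ^ r : k[X]) |
          ∃ (j : Fin n) (i : Fin r), (i : ℕ) * n + (j : ℕ) < m ∧
            w = AdjoinRoot.root (X ^ r : k[X]) ^ (i : ℕ) •
                  Pi.single j (1 : AdjoinRoot (X ^ r : k[X]))},
      (g : Matrix (Fin n) (Fin n) (AdjoinRoot (X ^ r : k[X]))).mulVec v ∈
        Submodule.span k
          {w : Fin n → AdjoinRoot (X ^ r : k[X]) |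
            ∃ (j : Fin n) (i : Fin r), (i : ℕ) * n + (j : ℕ) < m ∧
              w = AdjoinRoot.root (X ^ r : k[X]) ^ (i : ℕ) •
                    Pi.single j (1 : AdjoinRoot (X ^ r : k[X]))}) ↔
      (∃ h : (Matrix (Fin n) (Fin n) k)ˣ,
        (∀ a b : Fin n, b < a → (h : Matrix (Fin n) (Fin n) k) a b = 0) ∧
          (g : Matrix (Fin n) (Fin n) (AdjoinRoot (X ^ r : k[X]))) =
            (h : Matrix (Fin n) (Fin n) k).map (AdjoinRoot.of (X ^ r : k[X])))) := by
  have hdeg : (X ^ r : k[X]).degree ≠ 0 := by simp; omega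
  have := AdjoinRoot.nontrivial (X ^ r : k[X]) hdeg
  have hstab := forall_mulVec_mem_lexFlag_iff (k := k) (π := AdjoinRoot.root (X ^ r : k[X])) hr
    (g : Matrix (Fin n) (Fin n) (AdjoinRoot (X ^ r : k[X])))
  rw [AdjoinRoot.algebraMap_eq] at hstab
  exact ⟨hstab.trans (exists_blockTriangular_eq_map_iff
      (AdjoinRoot.of.injective_of_degree_ne_zero hdeg) _),
    hstab.trans (exists_unit_blockTriangular_eq_map_iff g.isUnit).symm⟩

/-- The stabilizer in `GL_n(k[π]/(π^r))` of the complete `k`-flag on `(k[π]/(π^r))^n`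
spanned by initial segments of the basis `x_j^{(i)} = π^i e_j` ordered lexicographically
by `(i,j)` consists exactly of the invertible upper triangular matrices all of whose
entries lie in the subfield `k` of constants; equivalently, it is the image of the group
of invertible upper triangular matrices of `GL_n(k)`. -/
theorem flag_stabilizer_lex_ij (k : Type*) [Field k] (n r : ℕ) (hn : 1 ≤ n) (hr : 1 ≤ r)
    (g : (Matrix (Fin n) (Fin n) (AdjoinRoot (X ^ r : k[X])))ˣ) :
    ((∀ m : ℕ, ∀ v ∈ Submodule.span k
        {w : Fin n → AdjoinRoot (X ^ r : k[X]) |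
          ∃ (j : Fin n) (i : Fin r), (i : ℕ) * n + (j : ℕ) < m ∧
            w = AdjoinRoot.root (X ^ r : k[X]) ^ (i : ℕ) •
                  Pi.single j (1 : AdjoinRoot (X ^ r : k[X]))},
      (g : Matrix (Fin n) (Fin n) (AdjoinRoot (X ^ r : k[X]))).mulVec v ∈
        Submodule.span k
          {w : Fin n → AdjoinRoot (X ^ r : k[X]) |
            ∃ (j : Fin n) (i : Fin r), (i : ℕ) * n + (j : ℕ) < m ∧
              w = AdjoinRoot.root (X ^ r : k[X]) ^ (i : ℕ) •
                    Pi.single j (1 : AdjoinRoot (X ^ r : k[X]))}) ↔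
      ((∀ a b : Fin n, b < a →
          (g : Matrix (Fin n) (Fin n) (AdjoinRoot (X ^ r : k[X]))) a b = 0) ∧
        ∀ a b : Fin n, ∃ c : k,
          (g : Matrix (Fin n) (Fin n) (AdjoinRoot (X ^ r : k[X]))) a b =
            AdjoinRoot.of (X ^ r : k[X]) c)) ∧
    ((∀ m : ℕ, ∀ v ∈ Submodule.span k
        {w : Fin n → AdjoinRoot (X ^ r : k[X]) |
          ∃ (j : Fin n) (i : Fin r), (i : ℕ) * n + (j : ℕ) < m ∧
            w = AdjoinRoot.root (X ^ r : k[X]) ^ (i : ℕ) •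
                  Pi.single j (1 : AdjoinRoot (X ^ r : k[X]))},
      (g : Matrix (Fin n) (Fin n) (AdjoinRoot (X ^ r : k[X]))).mulVec v ∈
        Submodule.span k
          {w : Fin n → AdjoinRoot (X ^ r : k[X]) |
            ∃ (j : Fin n) (i : Fin r), (i : ℕ) * n + (j : ℕ) < m ∧
              w = AdjoinRoot.root (X ^ r : k[X]) ^ (i : ℕ) •
                    Pi.single j (1 : AdjoinRoot (X ^ r : k[X]))}) ↔
      (∃ h : (Matrix (Fin n) (Fin n) k)ˣ,
        (∀ a b : Fin n, b < a → (h : Matrix (Fin n) (Fin n) k) a b = 0) ∧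
          (g : Matrix (Fin n) (Fin n) (AdjoinRoot (X ^ r : k[X]))) =
            (h : Matrix (Fin n) (Fin n) k).map (AdjoinRoot.of (X ^ r : k[X])))) :=
  flag_stabilizer_lex_ij_general k n r hr g
end
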